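/- Let R be a commutative domain and ι : R → Λ an injective ring homomorphism whose image lies in the center of Λ. Let M be a finitely generated torsion Λ-module which is completely faithful and which has no nonzero pseudo-null Λ-submodule. Then the R-torsion submodule M(R) = {m ∈ M : ι(r)m = 0 for some nonzero r ∈ R} is zero; that is, no nonzero element of M is annihilated by ι(r) for any nonzero r ∈ R. -/
import Mathlib


open CategoryTheory

/-- A module is torsion if every element is annihilated by a nonzero ring element. -/
def IsTorsionMod (Λ : Type) [Ring Λ] (M : Type) [AddCommGroup M] [Module Λ M] : Prop :=
  ∀ m : M, ∃ l : Λ, l ≠ 0 ∧ l • m = 0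

/-- A finitely generated torsion `Λ`-module is pseudo-null if `Ext¹_Λ(M, Λ) = 0`. -/
def IsPseudoNull (Λ : Type) [Ring Λ] (M : Type) [AddCommGroup M] [Module Λ M] : Prop :=
  Module.Finite Λ M ∧ IsTorsionMod Λ M ∧
    Subsingleton (((Ext ℤ (ModuleCat Λ) 1).obj (Opposite.op (ModuleCat.of Λ M))).obj
      (ModuleCat.of Λ Λ))

/-- `N` is pseudo-related to a subquotient of `M`: there are submodules `A ≤ B` of `M`,
a submodule `N₁ ≤ N` with `N/N₁` pseudo-null, a pseudo-null submodule `C` of `B/A`, and a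
`Λ`-homomorphism `N₁ → (B/A)/C` with pseudo-null kernel and cokernel. -/
def PseudoRelated (Λ : Type) [Ring Λ] (N M : Type) [AddCommGroup N] [Module Λ N]
    [AddCommGroup M] [Module Λ M] : Prop :=
  ∃ (A B : Submodule Λ M), A ≤ B ∧
    ∃ (N₁ : Submodule Λ N) (C : Submodule Λ (↥B ⧸ A.comap B.subtype))
      (f : N₁ →ₗ[Λ] ((↥B ⧸ A.comap B.subtype) ⧸ C)),
      IsPseudoNull Λ (N ⧸ N₁) ∧ IsPseudoNull Λ C ∧
      IsPseudoNull Λ (LinearMap.ker f) ∧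
      IsPseudoNull Λ ((((↥B ⧸ A.comap B.subtype) ⧸ C)) ⧸ LinearMap.range f)

/-- A finitely generated torsion `Λ`-module `M` is completely faithful if every finitely
generated torsion `Λ`-module `N` which is not pseudo-null and is pseudo-related to a
subquotient of `M` has trivial global annihilator ideal. -/
def CompletelyFaithful (Λ : Type) [Ring Λ] (M : Type) [AddCommGroup M] [Module Λ M] : Prop :=
  ∀ (N : Type) [AddCommGroup N] [Module Λ N],
    Module.Finite Λ N → IsTorsionMod Λ N → ¬ IsPseudoNull Λ N → PseudoRelated Λ N M →
      ∀ l : Λ, (∀ n : N, l • n = 0) → l = 0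

/-- The `R`-torsion submodule `M(R) = {m ∈ M : ι(r) • m = 0 for some nonzero r ∈ R}`, where
`ι : R → Λ` is a ring homomorphism from a commutative domain `R` with central image. -/
def rTorsionSub (R : Type) [CommRing R] [IsDomain R] (Λ : Type) [Ring Λ] (ι : R →+* Λ)
    (hcen : ∀ (r : R) (x : Λ), ι r * x = x * ι r)
    (M : Type) [AddCommGroup M] [Module Λ M] : Submodule Λ M where
  carrier := {m | ∃ r : R, r ≠ 0 ∧ ι r • m = 0}
  zero_mem' := ⟨1, one_ne_zero, smul_zero _⟩
  add_mem' := by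
    rintro a b ⟨r, hr, ha⟩ ⟨s, hs, hb⟩
    refine ⟨r * s, mul_ne_zero hr hs, ?_⟩
    have h1 : ι (r * s) • a = 0 := by
      rw [mul_comm, map_mul, mul_smul, ha, smul_zero]
    have h2 : ι (r * s) • b = 0 := by
      rw [map_mul, mul_smul, hb, smul_zero]
    rw [smul_add, h1, h2, add_zero]
  smul_mem' := by
    rintro c m ⟨r, hr, hm⟩
    refine ⟨r, hr, ?_⟩
    rw [smul_smul, hcen r c, mul_smul, hm, smul_zero]

theorem mem_rTorsionSub {R : Type} [CommRing R] [IsDomain R] {Λ : Type} [Ring Λ] {ι : R →+* Λ}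
    {hcen : ∀ (r : R) (x : Λ), ι r * x = x * ι r} {M : Type} [AddCommGroup M] [Module Λ M]
    (m : M) : m ∈ rTorsionSub R Λ ι hcen M ↔ ∃ r : R, r ≠ 0 ∧ ι r • m = 0 := Iff.rfl

open CategoryTheory Limits in
lemma isPseudoNull_of_subsingleton (Λ : Type) [Ring Λ] [Nontrivial Λ]
    (P : Type) [AddCommGroup P] [Module Λ P] [Subsingleton P] : IsPseudoNull Λ P := by
  refine ⟨⟨by rw [Subsingleton.elim (⊤ : Submodule Λ P) ⊥]; exact Submodule.fg_bot⟩,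
    fun m => ⟨1, one_ne_zero, Subsingleton.elim _ _⟩, ?_⟩
  haveI : Subsingleton (ModuleCat.of Λ P) := ‹Subsingleton P›
  have hz : IsZero (ModuleCat.of Λ P) := ModuleCat.isZero_of_subsingleton _
  have : Projective (ModuleCat.of Λ P) := hz.projective
  have h := isZero_Ext_succ_of_projective (R := ℤ) (C := ModuleCat Λ)
    (ModuleCat.of Λ P) (ModuleCat.of Λ Λ) 0
  have hid : 𝟙 (((Ext ℤ (ModuleCat Λ) 1).obj (Opposite.op (ModuleCat.of Λ P))).obj
      (ModuleCat.of Λ Λ)) = 0 := h.eq_of_src _ _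
  refine ⟨fun a b => ?_⟩
  have ha : a = 0 := by
    calc a = (𝟙 (((Ext ℤ (ModuleCat Λ) 1).obj (Opposite.op (ModuleCat.of Λ P))).obj
        (ModuleCat.of Λ Λ))) a := rfl
    _ = 0 := by rw [hid]; rfl
  have hb : b = 0 := by
    calc b = (𝟙 (((Ext ℤ (ModuleCat Λ) 1).obj (Opposite.op (ModuleCat.of Λ P))).obj
        (ModuleCat.of Λ Λ))) b := rfl
    _ = 0 := by rw [hid]; rfl
  rw [ha, hb]

/-- Let `R` be a commutative domain and `ι : R → Λ` an injective ring
homomorphism with central image. If `M` is a finitely generated torsion `Λ`-module which is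
completely faithful and has no nonzero pseudo-null `Λ`-submodule, then the `R`-torsion
submodule `M(R)` is zero: no nonzero element of `M` is annihilated by `ι r` for a nonzero
`r ∈ R`. -/


theorem rTorsion_eq_bot_of_completelyFaithful
    (Λ : Type) [Ring Λ] [IsNoetherianRing Λ] [IsNoetherianRing Λᵐᵒᵖ] [NoZeroDivisors Λ]
    (R : Type) [CommRing R] [IsDomain R] (ι : R →+* Λ) (hinj : Function.Injective ι)
    (hcen : ∀ (r : R) (x : Λ), ι r * x = x * ι r)
    (M : Type) [AddCommGroup M] [Module Λ M] [Module.Finite Λ M]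
    (htors : IsTorsionMod Λ M) (hcf : CompletelyFaithful Λ M)
    (hnops : ∀ S : Submodule Λ M, IsPseudoNull Λ S → S = ⊥) :
    rTorsionSub R Λ ι hcen M = ⊥ ∧
      ∀ m : M, ∀ r : R, r ≠ 0 → ι r • m = 0 → m = 0 := by
  have hnt : Nontrivial Λ := ⟨ι 0, ι 1, fun h => zero_ne_one (hinj h)⟩
  set T := rTorsionSub R Λ ι hcen M with hTdef
  suffices hTbot : T = ⊥ by
    refine ⟨hTbot, fun m r hr h0 => ?_⟩
    have hm : m ∈ T := ⟨r, hr, h0⟩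
    rw [hTbot] at hm
    exact hm
  -- T is finitely generated
  have hfgT : T.FG := IsNoetherian.noetherian T
  obtain ⟨s, hs⟩ := hfgT
  -- choose annihilators for the generators
  have hmem : ∀ m : {x // x ∈ s}, ∃ r : R, r ≠ 0 ∧ ι r • (m : M) = 0 := by
    intro m
    have : (m : M) ∈ T := hs ▸ Submodule.subset_span m.2
    exact this
  choose rr hrne hrann using hmem
  set r : R := ∏ m ∈ s.attach, rr m with hrdef
  have hr0 : r ≠ 0 := Finset.prod_ne_zero_iff.mpr fun m _ => hrne m
  have hιr : ι r ≠ 0 := fun h => hr0 (hinj (by rw [h, map_zero]))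
  -- ι r annihilates every element of T
  have hK : ∀ m ∈ T, ι r • m = 0 := by
    intro m hmT
    rw [← hs] at hmT
    induction hmT using Submodule.span_induction with
    | mem x hx =>
        have hdvd : rr ⟨x, hx⟩ ∣ r := Finset.dvd_prod_of_mem rr (Finset.mem_attach s ⟨x, hx⟩)
        obtain ⟨c, hc⟩ := hdvd
        have : ι r = ι c * ι (rr ⟨x, hx⟩) := by rw [← map_mul, ← hc.trans (mul_comm _ _)]
        rw [this, mul_smul, hrann ⟨x, hx⟩, smul_zero]
    | zero => exact smul_zero _
    | add x y hx hy ihx ihy => rw [smul_add, ihx, ihy, add_zero]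
    | smul c x hx ihx => rw [smul_smul, hcen r c, mul_smul, ihx, smul_zero]
  -- T must be pseudo-null, else complete faithfulness forces ι r = 0
  by_cases hpn : IsPseudoNull Λ ↥T
  · exact hnops T hpn
  · exfalso
    apply hιr
    have hfin : Module.Finite Λ ↥T := Module.Finite.iff_fg.mpr ⟨s, hs⟩
    have htorsT : IsTorsionMod Λ ↥T := by
      intro n
      obtain ⟨l, hl, hln⟩ := htors (n : M)
      exact ⟨l, hl, Subtype.ext (by simpa using hln)⟩
    have hpr : PseudoRelated Λ ↥T M := by
      refine ⟨⊥, T, bot_le, ⊤, ⊥, ?_, ?_, ?_, ?_, ?_⟩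
      · exact (Submodule.mkQ ⊥) ∘ₗ (Submodule.mkQ ((⊥ : Submodule Λ M).comap T.subtype)) ∘ₗ
          (Submodule.topEquiv : ↥(⊤ : Submodule Λ ↥T) ≃ₗ[Λ] ↥T).toLinearMap
      · haveI : Subsingleton (↥T ⧸ (⊤ : Submodule Λ ↥T)) :=
          Submodule.Quotient.subsingleton_iff.mpr rfl
        exact isPseudoNull_of_subsingleton Λ _
      · exact isPseudoNull_of_subsingleton Λ _
      · set f := (Submodule.mkQ (⊥ : Submodule Λ (↥T ⧸ (⊥ : Submodule Λ M).comap T.subtype))) ∘ₗ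
          (Submodule.mkQ ((⊥ : Submodule Λ M).comap T.subtype)) ∘ₗ
          (Submodule.topEquiv : ↥(⊤ : Submodule Λ ↥T) ≃ₗ[Λ] ↥T).toLinearMap with hf
        have hker : LinearMap.ker f = ⊥ := by
          rw [hf, LinearMap.ker_comp, Submodule.ker_mkQ, Submodule.comap_bot,
            LinearMap.ker_comp, Submodule.ker_mkQ, Submodule.comap_bot,
            Submodule.ker_subtype, Submodule.comap_bot]
          exact LinearMap.ker_eq_bot.mpr Submodule.topEquiv.injective
        haveI : Subsingleton ↥(LinearMap.ker f) := by rw [hker]; infer_instance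
        exact isPseudoNull_of_subsingleton Λ _
      · set f := (Submodule.mkQ (⊥ : Submodule Λ (↥T ⧸ (⊥ : Submodule Λ M).comap T.subtype))) ∘ₗ
          (Submodule.mkQ ((⊥ : Submodule Λ M).comap T.subtype)) ∘ₗ
          (Submodule.topEquiv : ↥(⊤ : Submodule Λ ↥T) ≃ₗ[Λ] ↥T).toLinearMap with hf
        have hsurj : Function.Surjective f := by
          rw [hf]
          exact (Submodule.mkQ_surjective _).comp
            ((Submodule.mkQ_surjective _).comp Submodule.topEquiv.surjective)
        have hrange : LinearMap.range f = ⊤ := LinearMap.range_eq_top.mpr hsurj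
        haveI : Subsingleton (_ ⧸ LinearMap.range f) := by
          rw [hrange]
          exact Submodule.Quotient.subsingleton_iff.mpr rfl
        exact isPseudoNull_of_subsingleton Λ _
    exact hcf ↥T hfin htorsT hpn hpr (ι r) fun n => Subtype.ext (by simpa using hK n n.2)
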